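/- Let t ≥ 2, let π_1,…,π_t be positive reals (strength parameters), let ν ≥ 0 (draw-propensity parameter), and let n > 0 (number of games between each pair in a balanced design). For each k define s_k = π_k · n · Σ_{i≠k} (1 + (ν/2)·√(π_i/π_k)) / (π_i + π_k + ν·√(π_i·π_k)). Then for all indices j, k: s_j − s_k = n·(√π_j − √π_k) · Σ_{i=1}^{t} [π_i·(√π_j + √π_k) + (ν/2)·√(π_i·π_j·π_k) + (ν/2)·π_i^{3/2}] / [(π_i + π_j + ν·√(π_i·π_j))·(π_i + π_k + ν·√(π_i·π_k))], and consequently s_j − s_k and π_j − π_k have the same sign (the Davidson model is consistent: in a balanced design, strength parameters respect the order of scores). -/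

import Mathlib

/-!
Write `π_i = a_i ^ 2`. Then `π_k` times the `i`-th summand of `s_k` is the expected score
`(a_k² + (ν/2) a_k a_i) / (a_k² + a_i² + ν a_k a_i)` of `k` against `i`, and adding the
term `i = k`, which is `1/2`, turns `s_k / n + 1/2` into a sum over all opponents.
Subtracting two such sums term by term, each difference factors as `(a_j - a_k)` times a
positive rational function, so `s_j - s_k` has the sign of `a_j - a_k`, which is the sign
of `π_j - π_k`.
-/

open Finset

lemma sign_sq_sub_sq {α : Type*} [CommRing α] [LinearOrder α] [IsStrictOrderedRing α] {a b : α}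
    (ha : 0 < a) (hb : 0 < b) :
    SignType.sign (a ^ 2 - b ^ 2) = SignType.sign (a - b) := by
  rw [sq_sub_sq, sign_mul, sign_pos (add_pos ha hb), one_mul]

lemma pos_iff_and_neg_iff_and_eq_zero_iff_of_sign_eq {α : Type*} [Zero α] [LinearOrder α]
    {x y : α} (h : SignType.sign x = SignType.sign y) :
    (0 < x ↔ 0 < y) ∧ (x < 0 ↔ y < 0) ∧ (x = 0 ↔ y = 0) :=
  ⟨by rw [← sign_eq_one_iff, h, sign_eq_one_iff],
    by rw [← sign_eq_neg_one_iff, h, sign_eq_neg_one_iff],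
    by rw [← sign_eq_zero_iff, h, sign_eq_zero_iff]⟩

namespace Davidson

variable {ν a b c : ℝ}

/-- Expected score (win `1`, draw `1/2`) of a player of strength `a ^ 2` against one of
strength `b ^ 2`, who win with probability `a² / D` and draw with probability `ν a b / D`. -/
noncomputable def pairScore (ν a b : ℝ) : ℝ :=
  (a ^ 2 + ν / 2 * (a * b)) / (a ^ 2 + b ^ 2 + ν * (a * b))

lemma pairDenom_pos (hν : 0 ≤ ν) (ha : 0 < a) (hb : 0 < b) :
    0 < a ^ 2 + b ^ 2 + ν * (a * b) := by
  positivity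

lemma pairScore_self (hν : ν ≠ -2) (ha : a ≠ 0) : pairScore ν a a = 1 / 2 := by
  have h : a ^ 2 + a ^ 2 + ν * (a * a) ≠ 0 := by
    rw [show a ^ 2 + a ^ 2 + ν * (a * a) = (2 + ν) * a ^ 2 by ring]
    exact mul_ne_zero (by contrapose! hν; linarith) (pow_ne_zero 2 ha)
  rw [pairScore, div_eq_iff h]
  ring

lemma sq_mul_div_eq_pairScore (ha : a ≠ 0) :
    a ^ 2 * ((1 + ν / 2 * (b / a)) / (b ^ 2 + a ^ 2 + ν * (b * a))) = pairScore ν a b := by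
  rw [pairScore, mul_div_assoc', add_comm (b ^ 2), mul_comm b a]
  congr 1
  field_simp

lemma pairScore_sub_pairScore (hac : c ^ 2 + a ^ 2 + ν * (c * a) ≠ 0)
    (hbc : c ^ 2 + b ^ 2 + ν * (c * b) ≠ 0) :
    pairScore ν a c - pairScore ν b c =
      (a - b) * ((c ^ 2 * (a + b) + ν / 2 * (c * a * b) + ν / 2 * (c ^ 2 * c)) /
        ((c ^ 2 + a ^ 2 + ν * (c * a)) * (c ^ 2 + b ^ 2 + ν * (c * b)))) := by
  have hac' : a ^ 2 + c ^ 2 + ν * (a * c) ≠ 0 := by convert hac using 1; ring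
  have hbc' : b ^ 2 + c ^ 2 + ν * (b * c) ≠ 0 := by convert hbc using 1; ring
  rw [pairScore, pairScore, div_sub_div _ _ hac' hbc', mul_div_assoc']
  congr 1 <;> ring

section Tournament

variable {ι : Type*} [Fintype ι] (ν n : ℝ) (a : ι → ℝ)

/-- The score `s_k` of the balanced design. The sum includes `i = k`, whose term is
`pairScore ν (a k) (a k) = 1/2`, hence the correction `- 1/2`. -/
noncomputable def score (k : ι) : ℝ :=
  n * (∑ i, pairScore ν (a k) (a i) - 1 / 2)

lemma sq_mul_sum_erase_eq_score [DecidableEq ι] (hν : ν ≠ -2) {k : ι} (hk : a k ≠ 0) :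
    a k ^ 2 * n * ∑ i ∈ univ.erase k,
      (1 + ν / 2 * (a i / a k)) / (a i ^ 2 + a k ^ 2 + ν * (a i * a k)) = score ν n a k := by
  rw [score, ← add_sum_erase _ _ (mem_univ k), pairScore_self hν hk, mul_comm (a k ^ 2),
    mul_assoc, mul_sum]
  simp only [sq_mul_div_eq_pairScore hk]
  ring

lemma score_sub_score {j k : ι} (hj : ∀ i, a i ^ 2 + a j ^ 2 + ν * (a i * a j) ≠ 0)
    (hk : ∀ i, a i ^ 2 + a k ^ 2 + ν * (a i * a k) ≠ 0) :
    score ν n a j - score ν n a k = n * (a j - a k) * ∑ i,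
      (a i ^ 2 * (a j + a k) + ν / 2 * (a i * a j * a k) + ν / 2 * (a i ^ 2 * a i)) /
        ((a i ^ 2 + a j ^ 2 + ν * (a i * a j)) * (a i ^ 2 + a k ^ 2 + ν * (a i * a k))) := by
  have hterm : ∀ i, pairScore ν (a j) (a i) - pairScore ν (a k) (a i) = _ :=
    fun i => pairScore_sub_pairScore (hj i) (hk i)
  rw [score, score, ← mul_sub, sub_sub_sub_cancel_right, ← sum_sub_distrib, mul_assoc]
  simp only [hterm, ← mul_sum]

lemma sign_score_sub_score (hν : 0 ≤ ν) (hn : 0 < n) (ha : ∀ i, 0 < a i) (j k : ι) :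
    SignType.sign (score ν n a j - score ν n a k) = SignType.sign (a j - a k) := by
  have hsum : 0 < ∑ i,
      (a i ^ 2 * (a j + a k) + ν / 2 * (a i * a j * a k) + ν / 2 * (a i ^ 2 * a i)) /
        ((a i ^ 2 + a j ^ 2 + ν * (a i * a j)) * (a i ^ 2 + a k ^ 2 + ν * (a i * a k))) := by
    refine sum_pos (fun i _ => ?_) ⟨j, mem_univ j⟩
    have := ha i; have := ha j; have := ha k
    positivity
  rw [score_sub_score ν n a (fun i => (pairDenom_pos hν (ha i) (ha j)).ne')
      (fun i => (pairDenom_pos hν (ha i) (ha k)).ne'),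
    sign_mul, sign_mul, sign_pos hn, sign_pos hsum, one_mul, mul_one]

end Tournament

end Davidson

theorem davidson_consistency (t : ℕ) (π : Fin t → ℝ)
    (hπ : ∀ i, 0 < π i) (ν : ℝ) (hν : 0 ≤ ν) (n : ℝ) (hn : 0 < n)
    (s : Fin t → ℝ)
    (hs : ∀ k, s k = π k * n * ∑ i ∈ Finset.univ.erase k,
      (1 + (ν / 2) * Real.sqrt (π i / π k)) /
        (π i + π k + ν * Real.sqrt (π i * π k))) :
    ∀ j k : Fin t,
      s j - s k = n * (Real.sqrt (π j) - Real.sqrt (π k)) *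
        ∑ i, (π i * (Real.sqrt (π j) + Real.sqrt (π k))
            + (ν / 2) * Real.sqrt (π i * π j * π k)
            + (ν / 2) * (π i * Real.sqrt (π i))) /
          ((π i + π j + ν * Real.sqrt (π i * π j)) *
            (π i + π k + ν * Real.sqrt (π i * π k)))
      ∧ (0 < s j - s k ↔ 0 < π j - π k)
      ∧ (s j - s k < 0 ↔ π j - π k < 0)
      ∧ (s j - s k = 0 ↔ π j - π k = 0) := by
  obtain ⟨a, ha, rfl⟩ : ∃ a : Fin t → ℝ, (∀ i, 0 < a i) ∧ π = fun i => a i ^ 2 :=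
    ⟨fun i => √(π i), fun i => Real.sqrt_pos.2 (hπ i),
      funext fun i => (Real.sq_sqrt (hπ i).le).symm⟩
  simp only [← mul_pow, ← div_pow, Real.sqrt_sq_eq_abs, abs_mul, abs_div, abs_of_pos (ha _)]
    at hs ⊢
  have hscore : ∀ k, s k = Davidson.score ν n a k := fun k =>
    (hs k).trans (Davidson.sq_mul_sum_erase_eq_score ν n a (by linarith) (ha k).ne')
  have hden : ∀ i l, a i ^ 2 + a l ^ 2 + ν * (a i * a l) ≠ 0 := fun i l =>
    (Davidson.pairDenom_pos hν (ha i) (ha l)).ne'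
  intro j k
  rw [hscore, hscore]
  refine ⟨Davidson.score_sub_score ν n a (fun i => hden i j) (fun i => hden i k), ?_⟩
  apply pos_iff_and_neg_iff_and_eq_zero_iff_of_sign_eq
  rw [Davidson.sign_score_sub_score ν n a hν hn ha, sign_sq_sub_sq (ha j) (ha k)]
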